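/- arXiv:1702.01083 — 2 statements merged into one kernel-verified Lean document; each statement's English description precedes it below -/
import Mathlib

section
/- Let M be a minimum-cost MM between S and T, and let l < r be real numbers such that no point of T lies in the open interval (l, r). Then there exists a real number q such that for every pair (a, b) ∈ M with a ∈ S and l < a < r: if a < q then b ≤ l, and if q < a then b ≥ r. (That is, the S-points of the block (l, r) that are matched to the left are exactly those below a separating point q, and those matched to the right are exactly those above q.) -/
open Finset

/-- A many-to-many matching (MM) between point sets `S` and `T` on the real line:
a set of pairs `(s, t)` with `s ∈ S`, `t ∈ T`, covering every point of `S` and of `T`. -/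
def IsMM (S T : Finset ℝ) (M : Finset (ℝ × ℝ)) : Prop :=
  (∀ p ∈ M, p.1 ∈ S ∧ p.2 ∈ T) ∧
  (∀ s ∈ S, ∃ t, (s, t) ∈ M) ∧
  (∀ t ∈ T, ∃ s, (s, t) ∈ M)

/-- The cost of a matching: the sum of the distances of its pairs. -/
noncomputable def mmCost (M : Finset (ℝ × ℝ)) : ℝ := ∑ p ∈ M, |p.1 - p.2|

/-- A minimum-cost MM. -/
def IsMinMM (S T : Finset ℝ) (M : Finset (ℝ × ℝ)) : Prop :=
  IsMM S T M ∧ ∀ M' : Finset (ℝ × ℝ), IsMM S T M' → mmCost M ≤ mmCost M'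

/-!
Suppose some `S`-point `a` of the gap `(l, r)` is matched to the right, to `b ≥ r`, while a
larger one `a' < r` is matched to the left, to `b' ≤ l`. Exchanging partners, i.e. replacing
`(a, b), (a', b')` by `(a, b'), (a', b)`, keeps every point covered and lowers the cost by
`2 (a' - a)`. Hence in a minimum-cost MM all `S`-points of the gap matched to the right lie
above all those matched to the left, and the least one matched to the right separates them.
-/

section Exchange

variable {S T : Finset ℝ} {M : Finset (ℝ × ℝ)} {p p' : ℝ × ℝ}

noncomputable def swapPartners (M : Finset (ℝ × ℝ)) (p p' : ℝ × ℝ) :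
    Finset (ℝ × ℝ) :=
  insert (p.1, p'.2) (insert (p'.1, p.2) ((M.erase p).erase p'))

lemma IsMM.swapPartners (hM : IsMM S T M) (hp : p ∈ M) (hp' : p' ∈ M) :
    IsMM S T (swapPartners M p p') := by
  obtain ⟨hmem, hScov, hTcov⟩ := hM
  refine ⟨?_, fun s hs => ?_, fun t ht => ?_⟩
  · intro x hx
    simp only [_root_.swapPartners, mem_insert, mem_erase] at hx
    rcases hx with rfl | rfl | ⟨-, -, hx⟩
    · exact ⟨(hmem p hp).1, (hmem p' hp').2⟩
    · exact ⟨(hmem p' hp').1, (hmem p hp).2⟩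
    · exact hmem x hx
  · obtain ⟨t, hst⟩ := hScov s hs
    by_cases h : (s, t) = p ∨ (s, t) = p'
    · rcases h with rfl | rfl
      · exact ⟨p'.2, mem_insert_self _ _⟩
      · exact ⟨p.2, mem_insert_of_mem (mem_insert_self _ _)⟩
    · obtain ⟨h₁, h₂⟩ := not_or.1 h
      exact ⟨t, by simp [_root_.swapPartners, h₁, h₂, hst]⟩
  · obtain ⟨s, hst⟩ := hTcov t ht
    by_cases h : (s, t) = p ∨ (s, t) = p'
    · rcases h with rfl | rfl
      · exact ⟨p'.1, mem_insert_of_mem (mem_insert_self _ _)⟩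
      · exact ⟨p.1, mem_insert_self _ _⟩
    · obtain ⟨h₁, h₂⟩ := not_or.1 h
      exact ⟨s, by simp [_root_.swapPartners, h₁, h₂, hst]⟩

lemma mmCost_insert_le (x : ℝ × ℝ) (M : Finset (ℝ × ℝ)) :
    mmCost (insert x M) ≤ |x.1 - x.2| + mmCost M := by
  by_cases hx : x ∈ M
  · rw [insert_eq_of_mem hx]
    exact le_add_of_nonneg_left (abs_nonneg _)
  · rw [mmCost, sum_insert hx, mmCost]

lemma mmCost_erase (hp : p ∈ M) : mmCost (M.erase p) = mmCost M - |p.1 - p.2| :=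
  sum_erase_eq_sub hp

lemma mmCost_swapPartners_le (hp : p ∈ M) (hp' : p' ∈ M) (hne : p' ≠ p) :
    mmCost (swapPartners M p p') ≤
      mmCost M - |p.1 - p.2| - |p'.1 - p'.2| + |p.1 - p'.2| + |p'.1 - p.2| := by
  have h₁ := mmCost_insert_le (p.1, p'.2) (insert (p'.1, p.2) ((M.erase p).erase p'))
  have h₂ := mmCost_insert_le (p'.1, p.2) ((M.erase p).erase p')
  rw [mmCost_erase (mem_erase.2 ⟨hne, hp'⟩), mmCost_erase hp] at h₂
  rw [swapPartners]
  linarith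

lemma IsMinMM.not_crossing {a b a' b' : ℝ} (hM : IsMinMM S T M)
    (hab : (a, b) ∈ M) (hab' : (a', b') ∈ M) (haa' : a < a') (hb' : b' ≤ a) (hb : a' ≤ b) :
    False := by
  have hne : (a', b') ≠ (a, b) := fun h => haa'.ne' (congrArg Prod.fst h)
  have hle := hM.2 _ (hM.1.swapPartners hab hab')
  have hswap := mmCost_swapPartners_le hab hab' hne
  simp only [abs_of_nonneg (sub_nonneg.2 hb'), abs_of_nonpos (sub_nonpos.2 hb),
    abs_of_nonpos (sub_nonpos.2 (haa'.le.trans hb)),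
    abs_of_nonneg (sub_nonneg.2 (hb'.trans haa'.le))] at hswap
  linarith

end Exchange

theorem stmt_5_general (S T : Finset ℝ)
    (M : Finset (ℝ × ℝ)) (hM : IsMinMM S T M)
    (l r : ℝ) (hTgap : ∀ t ∈ T, ¬ (l < t ∧ t < r)) :
    ∃ q : ℝ, ∀ a b : ℝ, (a, b) ∈ M → a ∈ S → l < a → a < r →
      (a < q → b ≤ l) ∧ (q < a → r ≤ b) := by
  classical
  have hside : ∀ a b, (a, b) ∈ M → b ≤ l ∨ r ≤ b := fun a b hab => by
    have := hTgap b (hM.1.1 _ hab).2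
    by_contra! h
    exact this h
  set R := (M.filter fun p => l < p.1 ∧ p.1 < r ∧ r ≤ p.2).image Prod.fst
  refine ⟨(insert r R).min' (insert_nonempty r R),
    fun a b hab _ hla har => ⟨fun haq => ?_, fun hqa => ?_⟩⟩
  · refine (hside a b hab).resolve_right fun hrb => haq.not_ge (min'_le _ _ ?_)
    exact mem_insert_of_mem (mem_image_of_mem _ (mem_filter.2 ⟨hab, hla, har, hrb⟩))
  · obtain hq | hq := mem_insert.1 (min'_mem _ (insert_nonempty r R))
    · exact absurd (hq ▸ hqa) har.not_gt
    · obtain ⟨⟨a₀, b₀⟩, hp₀, ha₀⟩ := mem_image.1 hq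
      obtain ⟨hab₀, hla₀, -, hrb₀⟩ := mem_filter.1 hp₀
      rw [← ha₀] at hqa
      exact (hside a b hab).resolve_left fun hbl =>
        hM.not_crossing hab₀ hab hqa (by linarith) (by linarith)

/-- Separating point: if no point of `T` lies in the open interval `(l, r)`, then
in a minimum-cost MM there is a point `q` such that every `S`-point of `(l, r)`
below `q` is matched to the left (`≤ l`) and every one above `q` is matched to the
right (`≥ r`). -/
theorem stmt_5 (S T : Finset ℝ) (hdisj : Disjoint S T) (hS : S.Nonempty) (hT : T.Nonempty)
    (M : Finset (ℝ × ℝ)) (hM : IsMinMM S T M)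
    (l r : ℝ) (hlr : l < r) (hTgap : ∀ t ∈ T, ¬ (l < t ∧ t < r)) :
    ∃ q : ℝ, ∀ a b : ℝ, (a, b) ∈ M → a ∈ S → l < a → a < r →
      (a < q → b ≤ l) ∧ (q < a → r ≤ b) :=
  stmt_5_general S T M hM l r hTgap
end

section
/- Let M be an OMMD between S and T containing a pair (a, d) with a ∈ S and d ∈ T, and let b ∈ T and c ∈ S satisfy a ≤ b < c ≤ d with (a, b) ∉ M and (c, d) ∉ M. Then M' := (M \ {(a, d)}) ∪ {(a, b), (c, d)} is an OMMD between S and T whose cost is strictly smaller than the cost of M. -/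
open Finset

/-- A many-to-many matching with demands (OMMD) between point sets `S` and `T`
on the real line with demand functions `α` (on `S`) and `β` (on `T`):
a set of pairs `(s, t)` with `s ∈ S`, `t ∈ T` such that every `s ∈ S` occurs in
at least `α s` pairs and every `t ∈ T` occurs in at least `β t` pairs. -/
def IsOMMD (S T : Finset ℝ) (α β : ℝ → ℕ) (M : Finset (ℝ × ℝ)) : Prop :=
  (∀ p ∈ M, p.1 ∈ S ∧ p.2 ∈ T) ∧
  (∀ s ∈ S, α s ≤ (M.filter (fun p => p.1 = s)).card) ∧
  (∀ t ∈ T, β t ≤ (M.filter (fun p => p.2 = t)).card)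

/-- A minimum-cost OMMD. -/
def IsMinOMMD (S T : Finset ℝ) (α β : ℝ → ℕ) (M : Finset (ℝ × ℝ)) : Prop :=
  IsOMMD S T α β M ∧ ∀ M' : Finset (ℝ × ℝ), IsOMMD S T α β M' → mmCost M ≤ mmCost M'

/-!
Every pair of `M` other than `(a, d)` is kept, and `a` is still covered by `(a, b)` and `d` by
`(c, d)`, so no demand count drops. Since `a ≤ b < c ≤ d`, the cost changes by
`(b - a) + (d - c) - (d - a) = b - c < 0`.
-/

lemma card_filter_le_of_erase_subset {ι : Type*} [DecidableEq ι] {M N : Finset ι} {p q : ι}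
    (P : ι → Prop) [DecidablePred P] (hsub : M.erase p ⊆ N) (hqN : q ∈ N) (hqM : q ∉ M.erase p)
    (hPq : P p → P q) : (M.filter P).card ≤ (N.filter P).card := by
  refine card_le_card_of_injOn (fun x => if x = p then q else x) ?_ ?_
  · intro x hx
    simp only [coe_filter, Set.mem_ofPred_eq] at hx ⊢
    split_ifs with hxp
    · exact ⟨hqN, hPq (hxp ▸ hx.2)⟩
    · exact ⟨hsub (mem_erase.2 ⟨hxp, hx.1⟩), hx.2⟩
  · intro x hx y hy hxy
    simp only [coe_filter, Set.mem_ofPred_eq] at hx hy hxy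
    split_ifs at hxy with hxp hyp hyp
    · exact hxp.trans hyp.symm
    · exact absurd (mem_erase.2 ⟨hyp, hy.1⟩) (hxy ▸ hqM)
    · exact absurd (mem_erase.2 ⟨hxp, hx.1⟩) (hxy ▸ hqM)
    · exact hxy

lemma IsOMMD.of_erase_subset {S T : Finset ℝ} {α β : ℝ → ℕ} {M N : Finset (ℝ × ℝ)}
    (hM : IsOMMD S T α β M) {p : ℝ × ℝ} (hsub : M.erase p ⊆ N)
    (hN : ∀ x ∈ N, x.1 ∈ S ∧ x.2 ∈ T)
    (q : ℝ × ℝ) (hqN : q ∈ N) (hqM : q ∉ M.erase p) (hq : q.1 = p.1)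
    (r : ℝ × ℝ) (hrN : r ∈ N) (hrM : r ∉ M.erase p) (hr : r.2 = p.2) :
    IsOMMD S T α β N :=
  ⟨hN,
    fun s hs => (hM.2.1 s hs).trans <|
      card_filter_le_of_erase_subset _ hsub hqN hqM fun h => hq.trans h,
    fun t ht => (hM.2.2 t ht).trans <|
      card_filter_le_of_erase_subset _ hsub hrN hrM fun h => hr.trans h⟩

lemma mmCost_sdiff_singleton_union_add {M Q : Finset (ℝ × ℝ)} {p : ℝ × ℝ} (hp : p ∈ M)
    (hMQ : Disjoint M Q) :
    mmCost ((M \ {p}) ∪ Q) + |p.1 - p.2| = mmCost M + mmCost Q := by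
  have hdisj : Disjoint (M \ {p}) Q := hMQ.mono_left sdiff_subset
  rw [mmCost, mmCost, mmCost, sum_union hdisj, sdiff_singleton_eq_erase, add_right_comm,
    sum_erase_add M _ hp]

lemma mmCost_pair {p q : ℝ × ℝ} (hpq : p ≠ q) :
    mmCost {p, q} = |p.1 - p.2| + |q.1 - q.2| :=
  sum_pair hpq

theorem stmt_9_general (S T : Finset ℝ)
    (α β : ℝ → ℕ)
    (M : Finset (ℝ × ℝ)) (hM : IsOMMD S T α β M)
    (a c : ℝ) (ha : a ∈ S) (hc : c ∈ S) (b d : ℝ) (hb : b ∈ T) (hd : d ∈ T)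
    (h1 : a ≤ b) (h2 : b < c) (h3 : c ≤ d)
    (had : (a, d) ∈ M) (hab : (a, b) ∉ M) (hcd : (c, d) ∉ M) :
    IsOMMD S T α β ((M \ {(a, d)}) ∪ {(a, b), (c, d)}) ∧
      mmCost ((M \ {(a, d)}) ∪ {(a, b), (c, d)}) < mmCost M := by
  have hsub : M.erase (a, d) ⊆ (M \ {(a, d)}) ∪ {(a, b), (c, d)} := by
    rw [← sdiff_singleton_eq_erase]
    exact subset_union_left
  have hN : ∀ x ∈ (M \ {(a, d)}) ∪ {(a, b), (c, d)}, x.1 ∈ S ∧ x.2 ∈ T := by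
    intro x hx
    simp only [mem_union, mem_sdiff, mem_insert, mem_singleton] at hx
    rcases hx with ⟨hxM, -⟩ | rfl | rfl
    exacts [hM.1 x hxM, ⟨ha, hb⟩, ⟨hc, hd⟩]
  refine ⟨hM.of_erase_subset hsub hN (a, b) (by simp) (fun h => hab (mem_of_mem_erase h)) rfl
    (c, d) (by simp) (fun h => hcd (mem_of_mem_erase h)) rfl, ?_⟩
  have hne : ((a, b) : ℝ × ℝ) ≠ (c, d) := by simp [(h1.trans_lt h2).ne]
  have hcost := mmCost_sdiff_singleton_union_add had (Q := {(a, b), (c, d)}) (by simp [hab, hcd])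
  rw [mmCost_pair hne] at hcost
  simp only [abs_sub_comm a, abs_sub_comm c, abs_of_nonneg (sub_nonneg.2 h1),
    abs_of_nonneg (sub_nonneg.2 h3), abs_of_nonneg (sub_nonneg.2 (h1.trans (h2.le.trans h3)))]
    at hcost
  linarith

/-- Replacing a long pair `(a, d)` of an OMMD by `(a, b)` and `(c, d)`
(with `a ≤ b < c ≤ d`, the latter two absent from `M`) yields an OMMD of
strictly smaller cost. -/
theorem stmt_9 (S T : Finset ℝ) (hdisj : Disjoint S T) (hS : S.Nonempty) (hT : T.Nonempty)
    (α β : ℝ → ℕ) (hα : ∀ s ∈ S, 1 ≤ α s) (hβ : ∀ t ∈ T, 1 ≤ β t)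
    (M : Finset (ℝ × ℝ)) (hM : IsOMMD S T α β M)
    (a c : ℝ) (ha : a ∈ S) (hc : c ∈ S) (b d : ℝ) (hb : b ∈ T) (hd : d ∈ T)
    (h1 : a ≤ b) (h2 : b < c) (h3 : c ≤ d)
    (had : (a, d) ∈ M) (hab : (a, b) ∉ M) (hcd : (c, d) ∉ M) :
    IsOMMD S T α β ((M \ {(a, d)}) ∪ {(a, b), (c, d)}) ∧
      mmCost ((M \ {(a, d)}) ∪ {(a, b), (c, d)}) < mmCost M :=
  stmt_9_general S T α β M hM a c ha hc b d hb hd h1 h2 h3 had hab hcd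
end
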